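/- For any finite node set X ⊆ ℝ², the dimension of the space P_{n,X} = {p ∈ Π_n : p vanishes on X} equals N − |Y|, where N = (n+1)(n+2)/2 and Y is any maximal n-independent subset of X. -/

import Mathlib

open MvPolynomial
open scoped Classical

/-- Evaluation of a bivariate polynomial at a point of the plane. -/
noncomputable def evalPt (p : MvPolynomial (Fin 2) ℝ) (A : ℝ × ℝ) : ℝ :=
  MvPolynomial.eval ![A.1, A.2] p

/-- `p` is an `n`-fundamental polynomial of the node `A` with respect to the node set `X`. -/
def IsFund (n : ℕ) (X : Finset (ℝ × ℝ)) (A : ℝ × ℝ)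
    (p : MvPolynomial (Fin 2) ℝ) : Prop :=
  p.totalDegree ≤ n ∧ evalPt p A = 1 ∧ ∀ B ∈ X, B ≠ A → evalPt p B = 0

/-- The node set `X` is `n`-independent. -/
def Indep (n : ℕ) (X : Finset (ℝ × ℝ)) : Prop :=
  ∀ A ∈ X, ∃ p, IsFund n X A p

/-- `d(n,k) = N_n - N_{n-k} = k(2n+3-k)/2`. -/
def dd (n k : ℕ) : ℕ := k * (2 * n + 3 - k) / 2

/-- The node set `X` is `n`-poised. -/
def Poised (n : ℕ) (X : Finset (ℝ × ℝ)) : Prop :=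
  X.card = (n + 1) * (n + 2) / 2 ∧
  ∀ p : MvPolynomial (Fin 2) ℝ, p.totalDegree ≤ n →
    (∀ A ∈ X, evalPt p A = 0) → p = 0

/-- The space of polynomials of total degree at most `n` vanishing on `X`. -/
noncomputable def vanishSp (n : ℕ) (X : Finset (ℝ × ℝ)) :
    Submodule ℝ (MvPolynomial (Fin 2) ℝ) :=
  MvPolynomial.restrictTotalDegree (Fin 2) ℝ n ⊓
    ⨅ A ∈ X, LinearMap.ker ((MvPolynomial.aeval (R := ℝ) ![A.1, A.2]).toLinearMap)


/-!
If `p ∈ Π_n` vanishes on `Y` but not at some `A ∈ X`, then `p` and the fundamental polynomials of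
`Y`, corrected by multiples of `p`, show that `Y ∪ {A}` is `n`-independent; so by maximality
`P_{n,X} = P_{n,Y}`. For `n`-independent `Y` the fundamental polynomials show that evaluation
`Π_n → ℝ^Y` is onto, and its kernel is `P_{n,Y}`; rank–nullity with `dim Π_n = (n+2).choose 2`
gives the count.
-/

lemma Nat.sum_range_add_sub_one_choose (c n : ℕ) :
    ∑ d ∈ Finset.range (n + 1), (c + d - 1).choose d = (n + c).choose c := by
  rcases c with _ | k
  · simp [Finset.sum_range_succ']
  · have (d : ℕ) : (k + 1 + d - 1).choose d = (d + k).choose k := by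
      rw [show k + 1 + d - 1 = d + k by omega, Nat.choose_symm_add]
    simp_rw [this, Nat.sum_range_add_choose, add_assoc]

namespace MvPolynomial

variable {σ K : Type*} [Field K]

lemma setOf_sum_le_eq_biUnion_finsuppAntidiag [Fintype σ] [DecidableEq σ] (n : ℕ) :
    {s : σ →₀ ℕ | (s.sum fun _ e => e) ≤ n} =
      (((Finset.range (n + 1)).biUnion fun d => Finset.univ.finsuppAntidiag d :
        Finset (σ →₀ ℕ)) : Set (σ →₀ ℕ)) := by
  ext s
  simp [Finsupp.sum_fintype]

theorem finrank_restrictTotalDegree [Fintype σ] (n : ℕ) :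
    Module.finrank K (restrictTotalDegree σ K n) =
      (n + Fintype.card σ).choose (Fintype.card σ) := by
  classical
  rw [restrictTotalDegree, Module.finrank_eq_nat_card_basis (basisRestrictSupport K _),
    setOf_sum_le_eq_biUnion_finsuppAntidiag, Nat.card_coe_set_eq, Set.ncard_coe_finset,
    Finset.card_biUnion]
  · simp only [Finset.card_finsuppAntidiag_nat_eq_choose, Finset.card_univ,
      Nat.sum_range_add_sub_one_choose]
  · intro d _ e _ hde
    simp only [Function.onFun, Finset.disjoint_left, Finset.mem_finsuppAntidiag]
    rintro s ⟨rfl, -⟩ ⟨h, -⟩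
    exact hde h

end MvPolynomial

lemma finrank_inf_ker_add_finrank_range_domRestrict {K V W : Type*} [Field K]
    [AddCommGroup V] [Module K V] [AddCommGroup W] [Module K W]
    (p : Submodule K V) [FiniteDimensional K p] (f : V →ₗ[K] W) :
    Module.finrank K ↥(p ⊓ LinearMap.ker f) + Module.finrank K (LinearMap.range (f.domRestrict p))
      = Module.finrank K p := by
  rw [← Submodule.map_comap_subtype, Submodule.finrank_map_subtype_eq, ← LinearMap.ker_domRestrict,
    add_comm, LinearMap.finrank_range_add_finrank_ker]

lemma finrank_restrictTotalDegree_fin_two (n : ℕ) :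
    Module.finrank ℝ (restrictTotalDegree (Fin 2) ℝ n) = (n + 1) * (n + 2) / 2 := by
  rw [finrank_restrictTotalDegree, Fintype.card_fin, Nat.choose_two_right, mul_comm]
  rfl

lemma mem_vanishSp {n : ℕ} {X : Finset (ℝ × ℝ)} {p : MvPolynomial (Fin 2) ℝ} :
    p ∈ vanishSp n X ↔ p.totalDegree ≤ n ∧ ∀ A ∈ X, evalPt p A = 0 := by
  simp only [vanishSp, Submodule.mem_inf, Submodule.mem_iInf, LinearMap.mem_ker,
    AlgHom.toLinearMap_apply, mem_restrictTotalDegree]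
  rfl

@[simp]
lemma evalPt_sub (p q : MvPolynomial (Fin 2) ℝ) (A : ℝ × ℝ) :
    evalPt (p - q) A = evalPt p A - evalPt q A :=
  map_sub _ p q

@[simp]
lemma evalPt_smul (c : ℝ) (p : MvPolynomial (Fin 2) ℝ) (A : ℝ × ℝ) :
    evalPt (c • p) A = c * evalPt p A :=
  smul_eval _ p c

lemma Indep.insert {n : ℕ} {Y : Finset (ℝ × ℝ)} {p : MvPolynomial (Fin 2) ℝ} {A : ℝ × ℝ}
    (hY : Indep n Y) (hp : p ∈ vanishSp n Y) (hpA : evalPt p A ≠ 0) : Indep n (insert A Y) := by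
  obtain ⟨hp_deg, hpY⟩ := mem_vanishSp.mp hp
  intro B hB
  rcases Finset.mem_insert.mp hB with rfl | hBY
  · refine ⟨(evalPt p B)⁻¹ • p, (totalDegree_smul_le _ _).trans hp_deg, ?_, ?_⟩
    · simp [hpA]
    · intro C hC hCB
      simp [hpY C ((Finset.mem_insert.mp hC).resolve_left hCB)]
  · obtain ⟨q, hq_deg, hqB, hqY⟩ := hY B hBY
    refine ⟨q - (evalPt q A / evalPt p A) • p, ?_, by simp [hqB, hpY B hBY], ?_⟩
    · exact (totalDegree_sub _ _).trans (max_le hq_deg ((totalDegree_smul_le _ _).trans hp_deg))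
    · intro C hC hCB
      rcases Finset.mem_insert.mp hC with rfl | hCY
      · simp [hpA]
      · simp [hqY C hCY hCB, hpY C hCY]

lemma vanishSp_anti (n : ℕ) {X Y : Finset (ℝ × ℝ)} (hYX : Y ⊆ X) :
    vanishSp n X ≤ vanishSp n Y := fun _ hp =>
  mem_vanishSp.mpr ⟨(mem_vanishSp.mp hp).1, fun A hA => (mem_vanishSp.mp hp).2 A (hYX hA)⟩

lemma vanishSp_eq_of_maximal {n : ℕ} {X Y : Finset (ℝ × ℝ)} (hYX : Y ⊆ X) (hY : Indep n Y)
    (hmax : ∀ Z, Z ⊆ X → Indep n Z → Y ⊆ Z → Z = Y) : vanishSp n X = vanishSp n Y := by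
  refine le_antisymm (vanishSp_anti n hYX) fun p hp => ?_
  refine mem_vanishSp.mpr ⟨(mem_vanishSp.mp hp).1, fun A hA => ?_⟩
  by_contra hpA
  have hAY : insert A Y = Y :=
    hmax _ (Finset.insert_subset hA hYX) (hY.insert hp hpA) (Finset.subset_insert A Y)
  exact hpA ((mem_vanishSp.mp hp).2 A (hAY ▸ Finset.mem_insert_self A Y))

noncomputable def evalOn (Y : Finset (ℝ × ℝ)) : MvPolynomial (Fin 2) ℝ →ₗ[ℝ] (Y → ℝ) :=
  LinearMap.pi fun A => (aeval ![A.1.1, A.1.2]).toLinearMap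

@[simp]
lemma evalOn_apply (Y : Finset (ℝ × ℝ)) (p : MvPolynomial (Fin 2) ℝ) (A : Y) :
    evalOn Y p A = evalPt p A :=
  rfl

lemma vanishSp_eq_inf_ker_evalOn (n : ℕ) (Y : Finset (ℝ × ℝ)) :
    vanishSp n Y = restrictTotalDegree (Fin 2) ℝ n ⊓ LinearMap.ker (evalOn Y) := by
  ext p
  simp [mem_vanishSp, funext_iff, mem_restrictTotalDegree]

lemma Indep.surjective_evalOn {n : ℕ} {Y : Finset (ℝ × ℝ)} (hY : Indep n Y) :
    Function.Surjective ((evalOn Y).domRestrict (restrictTotalDegree (Fin 2) ℝ n)) := by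
  choose q hq using hY
  intro f
  refine ⟨⟨∑ A : Y, f A • q A A.2, Submodule.sum_mem _ fun A _ => Submodule.smul_mem _ _ <|
    (mem_restrictTotalDegree _ _ _).mpr (hq A A.2).1⟩, funext fun B => ?_⟩
  rw [LinearMap.domRestrict_apply, map_sum, Finset.sum_apply]
  simp only [evalOn_apply, evalPt_smul]
  rw [Finset.sum_eq_single B]
  · rw [(hq B B.2).2.1, mul_one]
  · intro A _ hAB
    rw [(hq A A.2).2.2 B B.2 (fun h => hAB (Subtype.ext h).symm), mul_zero]
  · simp

lemma Indep.finrank_vanishSp {n : ℕ} {Y : Finset (ℝ × ℝ)} (hY : Indep n Y) :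
    Module.finrank ℝ (vanishSp n Y) = (n + 1) * (n + 2) / 2 - Y.card := by
  have h := finrank_inf_ker_add_finrank_range_domRestrict (restrictTotalDegree (Fin 2) ℝ n)
    (evalOn Y)
  rw [LinearMap.range_eq_top.mpr hY.surjective_evalOn, finrank_top, Module.finrank_pi,
    Fintype.card_coe, finrank_restrictTotalDegree_fin_two, ← vanishSp_eq_inf_ker_evalOn] at h
  omega

theorem stmt4 (n : ℕ) (X Y : Finset (ℝ × ℝ)) (hYX : Y ⊆ X) (hY : Indep n Y)
    (hmax : ∀ Z, Z ⊆ X → Indep n Z → Y ⊆ Z → Z = Y) :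
    Module.finrank ℝ (vanishSp n X) = (n + 1) * (n + 2) / 2 - Y.card := by
  rw [vanishSp_eq_of_maximal hYX hY hmax, hY.finrank_vanishSp]
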